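/- arXiv:2506.08050 — 5 statements merged into one kernel-verified Lean document; each statement's English description precedes it below -/
import Mathlib

section
/- Let n ≥ 6 and let i,j,k,l,m,p be distinct elements of {1,...,n}. Then in the group Γ_n^4 the equality [(iklp),(iklm)] = [(iklp),(ijkl)] holds. -/
/-- An ordered quadruple `(i,j,k,l)` of pairwise distinct elements of `Fin n`
(`Fin n` encoding the set `{1,…,n}`). -/
structure KMQuad (n : ℕ) where
  i : Fin n
  j : Fin n
  k : Fin n
  l : Fin n
  nodup : ([i, j, k, l] : List (Fin n)).Nodup

/-- The underlying 4-element set of a quadruple. -/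
def KMQuad.toFinset {n : ℕ} (q : KMQuad n) : Finset (Fin n) := {q.i, q.j, q.k, q.l}

/-- The generator of the free group corresponding to the symbol `(ijkl)`. -/
def kmFree {n : ℕ} (i j k l : Fin n) (h : ([i, j, k, l] : List (Fin n)).Nodup) :
    FreeGroup (KMQuad n) :=
  FreeGroup.of ⟨i, j, k, l, h⟩

/-- The relations of the Kim–Manturov presentation: involutive, commutation,
pentagon, and dihedral relations. -/
def kmRels (n : ℕ) : Set (FreeGroup (KMQuad n)) :=
  -- involutive relations
  {w | ∃ q : KMQuad n, w = FreeGroup.of q * FreeGroup.of q} ∪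
  -- commutation relations
  {w | ∃ q r : KMQuad n, (q.toFinset ∩ r.toFinset).card ≤ 2 ∧
        w = FreeGroup.of q * FreeGroup.of r * (FreeGroup.of q)⁻¹ * (FreeGroup.of r)⁻¹} ∪
  -- pentagon relations
  {w | ∃ i j k l m : Fin n, ([i, j, k, l, m] : List (Fin n)).Nodup ∧
        ∃ (h₁ : ([i, j, k, l] : List (Fin n)).Nodup)
          (h₂ : ([i, j, l, m] : List (Fin n)).Nodup)
          (h₃ : ([j, k, l, m] : List (Fin n)).Nodup)
          (h₄ : ([i, j, k, m] : List (Fin n)).Nodup)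
          (h₅ : ([i, k, l, m] : List (Fin n)).Nodup),
        w = kmFree i j k l h₁ * kmFree i j l m h₂ * kmFree j k l m h₃ *
            kmFree i j k m h₄ * kmFree i k l m h₅} ∪
  -- dihedral relations (ijkl) = (jkli)
  {w | ∃ (q : KMQuad n) (h : ([q.j, q.k, q.l, q.i] : List (Fin n)).Nodup),
        w = FreeGroup.of q * (kmFree q.j q.k q.l q.i h)⁻¹} ∪
  -- dihedral relations (ijkl) = (lkji)
  {w | ∃ (q : KMQuad n) (h : ([q.l, q.k, q.j, q.i] : List (Fin n)).Nodup),
        w = FreeGroup.of q * (kmFree q.l q.k q.j q.i h)⁻¹}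

/-- The Kim–Manturov group `Γₙ⁴`. -/
abbrev KMGamma (n : ℕ) : Type := PresentedGroup (kmRels n)

/-- The image of a quadruple in `Γₙ⁴`. -/
def km {n : ℕ} (q : KMQuad n) : KMGamma n := PresentedGroup.of q

/-- The generator `(ijkl)` of `Γₙ⁴`. -/
def kmg {n : ℕ} (i j k l : Fin n) (h : ([i, j, k, l] : List (Fin n)).Nodup) : KMGamma n :=
  PresentedGroup.of ⟨i, j, k, l, h⟩


namespace KMAux

variable {n : ℕ}

lemma rel_one {r : FreeGroup (KMQuad n)} (hr : r ∈ kmRels n) :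
    PresentedGroup.mk (kmRels n) r = 1 :=
  (QuotientGroup.eq_one_iff r).mpr (Subgroup.subset_normalClosure hr)

lemma km_eq (q : KMQuad n) : km q = PresentedGroup.mk (kmRels n) (FreeGroup.of q) := rfl

lemma km_sq (q : KMQuad n) : km q * km q = 1 := by
  have := rel_one (r := FreeGroup.of q * FreeGroup.of q)
    (Or.inl (Or.inl (Or.inl (Or.inl ⟨q, rfl⟩))))
  simpa [km_eq, map_mul] using this

lemma km_inv (q : KMQuad n) : (km q)⁻¹ = km q :=
  inv_eq_of_mul_eq_one_right (km_sq q)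

lemma km_comm (q r : KMQuad n) (h : (q.toFinset ∩ r.toFinset).card ≤ 2) :
    km q * km r = km r * km q := by
  have := rel_one (r := FreeGroup.of q * FreeGroup.of r * (FreeGroup.of q)⁻¹ * (FreeGroup.of r)⁻¹)
    (Or.inl (Or.inl (Or.inl (Or.inr ⟨q, r, h, rfl⟩))))
  simp only [km_eq, map_mul, map_inv] at this ⊢
  calc (PresentedGroup.mk (kmRels n)) (FreeGroup.of q) * (PresentedGroup.mk (kmRels n)) (FreeGroup.of r)
      = ((PresentedGroup.mk (kmRels n)) (FreeGroup.of q) * (PresentedGroup.mk (kmRels n)) (FreeGroup.of r) *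
          ((PresentedGroup.mk (kmRels n)) (FreeGroup.of q))⁻¹ * ((PresentedGroup.mk (kmRels n)) (FreeGroup.of r))⁻¹) *
        ((PresentedGroup.mk (kmRels n)) (FreeGroup.of r) * (PresentedGroup.mk (kmRels n)) (FreeGroup.of q)) := by
        group
    _ = _ := by rw [this, one_mul]

lemma km_pentagon (i j k l m : Fin n) (hd : ([i, j, k, l, m] : List (Fin n)).Nodup)
    (h₁ : ([i, j, k, l] : List (Fin n)).Nodup)
    (h₂ : ([i, j, l, m] : List (Fin n)).Nodup)
    (h₃ : ([j, k, l, m] : List (Fin n)).Nodup)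
    (h₄ : ([i, j, k, m] : List (Fin n)).Nodup)
    (h₅ : ([i, k, l, m] : List (Fin n)).Nodup) :
    kmg i j k l h₁ * kmg i j l m h₂ * kmg j k l m h₃ * kmg i j k m h₄ * kmg i k l m h₅ = 1 := by
  have := rel_one (r := kmFree i j k l h₁ * kmFree i j l m h₂ * kmFree j k l m h₃ *
      kmFree i j k m h₄ * kmFree i k l m h₅)
    (Or.inl (Or.inl (Or.inr ⟨i, j, k, l, m, hd, h₁, h₂, h₃, h₄, h₅, rfl⟩)))
  simpa [kmg, kmFree, PresentedGroup.of, map_mul] using this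

lemma card_le_two_of_subset_pair {s : Finset (Fin n)} {u v : Fin n} (h : s ⊆ {u, v}) :
    s.card ≤ 2 := by
  refine le_trans (Finset.card_le_card h) ?_
  refine le_trans (Finset.card_insert_le _ _) ?_
  simp

lemma sandwich {G : Type*} [Group G] (a u w : G) (hu : u * u = 1) (hc : u * a = a * u) :
    u * (a * (u * w)) = a * w := by
  rw [← mul_assoc, hc, mul_assoc, ← mul_assoc u u, hu, one_mul]

end KMAux

open scoped commutatorElement

/-- For `n ≥ 6` and distinct `i,j,k,l,m,p` in `{1,…,n}`, the equality
`⁅(iklp),(iklm)⁆ = ⁅(iklp),(ijkl)⁆` holds in `Γₙ⁴`. -/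
theorem KMGamma_comm_eq_one (n : ℕ) (hn : 6 ≤ n) (i j k l m p : Fin n)
    (hd : ([i, j, k, l, m, p] : List (Fin n)).Nodup)
    (h₁ : ([i, k, l, p] : List (Fin n)).Nodup)
    (h₂ : ([i, k, l, m] : List (Fin n)).Nodup)
    (h₃ : ([i, j, k, l] : List (Fin n)).Nodup) :
    ⁅(kmg i k l p h₁ : KMGamma n), kmg i k l m h₂⁆ =
      ⁅(kmg i k l p h₁ : KMGamma n), kmg i j k l h₃⁆ := by
  classical
  open KMAux in
  -- pairwise distinctness
  simp only [List.nodup_cons, List.mem_cons, List.not_mem_nil, or_false, List.nodup_nil,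
    and_true, not_or] at hd
  obtain ⟨⟨hij, hik, hil, him, hip⟩, ⟨hjk, hjl, hjm, hjp⟩, ⟨hkl, hkm, hkp⟩, ⟨hlm, hlp⟩, hmp, -⟩ := hd
  have hx : ([i, j, l, m] : List (Fin n)).Nodup := by
    simp [List.nodup_cons, hij, hil, him, hjl, hjm, hlm]
  have hy : ([j, k, l, m] : List (Fin n)).Nodup := by
    simp [List.nodup_cons, hjk, hjl, hjm, hkl, hkm, hlm]
  have hz : ([i, j, k, m] : List (Fin n)).Nodup := by
    simp [List.nodup_cons, hij, hik, him, hjk, hjm, hkm]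
  have hd5 : ([i, j, k, l, m] : List (Fin n)).Nodup := by
    simp [List.nodup_cons, hij, hik, hil, him, hjk, hjl, hjm, hkl, hkm, hlm]
  set a := kmg i k l p h₁ with ha
  set b := kmg i k l m h₂ with hb
  set c := kmg i j k l h₃ with hcdef
  set x := kmg i j l m hx with hxdef
  set y := kmg j k l m hy with hydef
  set z := kmg i j k m hz with hzdef
  -- squares
  have sa : a * a = 1 := km_sq _
  have sb : b * b = 1 := km_sq _
  have sc : c * c = 1 := km_sq _
  have sx : x * x = 1 := km_sq _
  have sy : y * y = 1 := km_sq _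
  have sz : z * z = 1 := km_sq _
  -- commutation of x, y, z with a
  have cxa : x * a = a * x := by
    refine km_comm _ _ (card_le_two_of_subset_pair (u := i) (v := l) ?_)
    intro t ht
    simp only [KMQuad.toFinset, Finset.mem_inter, Finset.mem_insert, Finset.mem_singleton] at ht ⊢
    obtain ⟨h1, h2⟩ := ht
    rcases h1 with rfl | rfl | rfl | rfl <;> rcases h2 with h2 | h2 | h2 | h2 <;> simp_all
  have cya : y * a = a * y := by
    refine km_comm _ _ (card_le_two_of_subset_pair (u := k) (v := l) ?_)
    intro t ht
    simp only [KMQuad.toFinset, Finset.mem_inter, Finset.mem_insert, Finset.mem_singleton] at ht ⊢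
    obtain ⟨h1, h2⟩ := ht
    rcases h1 with rfl | rfl | rfl | rfl <;> rcases h2 with h2 | h2 | h2 | h2 <;> simp_all
  have cza : z * a = a * z := by
    refine km_comm _ _ (card_le_two_of_subset_pair (u := i) (v := k) ?_)
    intro t ht
    simp only [KMQuad.toFinset, Finset.mem_inter, Finset.mem_insert, Finset.mem_singleton] at ht ⊢
    obtain ⟨h1, h2⟩ := ht
    rcases h1 with rfl | rfl | rfl | rfl <;> rcases h2 with h2 | h2 | h2 | h2 <;> simp_all
  -- pentagon: c * x * y * z * b = 1
  have pent : c * x * y * z * b = 1 := km_pentagon i j k l m hd5 h₃ hx hy hz h₂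
  have hc1 : c = b⁻¹ * z⁻¹ * y⁻¹ * x⁻¹ := by
    have h' : c * (x * y * z * b) = 1 := by rw [← pent]; group
    rw [mul_eq_one_iff_eq_inv] at h'
    rw [h']; group
  have ibnv : b⁻¹ = b := inv_eq_of_mul_eq_one_right sb
  have ixnv : x⁻¹ = x := inv_eq_of_mul_eq_one_right sx
  have iynv : y⁻¹ = y := inv_eq_of_mul_eq_one_right sy
  have iznv : z⁻¹ = z := inv_eq_of_mul_eq_one_right sz
  have ianv : a⁻¹ = a := inv_eq_of_mul_eq_one_right sa
  have icnv : c⁻¹ = c := inv_eq_of_mul_eq_one_right sc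
  have hc : c = b * z * y * x := by rw [hc1, ibnv, ixnv, iynv, iznv]
  have hc' : c = x * y * z * b := by
    calc c = c⁻¹ := icnv.symm
    _ = (b * z * y * x)⁻¹ := by rw [← hc]
    _ = x⁻¹ * y⁻¹ * z⁻¹ * b⁻¹ := by group
    _ = x * y * z * b := by rw [ibnv, ixnv, iynv, iznv]
  have key : c * a * c = b * a * b := by
    nth_rewrite 1 [hc]
    nth_rewrite 1 [hc']
    simp only [mul_assoc]
    congr 1
    rw [sandwich a x _ sx cxa, sandwich a y _ sy cya, sandwich a z _ sz cza]
  calc ⁅a, b⁆ = a * b * a⁻¹ * b⁻¹ := rfl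
    _ = a * (b * a * b) := by rw [ianv, ibnv]; group
    _ = a * (c * a * c) := by rw [key]
    _ = a * c * a⁻¹ * c⁻¹ := by rw [ianv, icnv]; group
    _ = ⁅a, c⁆ := rfl
end

section
/- Let n ≥ 6 and let i,j,k,l,m,p be distinct elements of {1,...,n}. Then in the group Γ_n^4 the equality [(ikpl),(iklm)] = [(ikpl),(ijkl)] holds. -/
section Aux
variable {n : ℕ}

lemma pg_rel_one {α : Type*} {rels : Set (FreeGroup α)} {w : FreeGroup α} (h : w ∈ rels) :
    PresentedGroup.mk rels w = 1 := by
  show (QuotientGroup.mk w : PresentedGroup rels) = 1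
  rw [QuotientGroup.eq_one_iff]
  exact Subgroup.subset_normalClosure h

lemma km_sq (q : KMQuad n) : km q * km q = 1 := by
  have := pg_rel_one (rels := kmRels n)
    (Set.mem_union_left _ (Set.mem_union_left _ (Set.mem_union_left _
      (Set.mem_union_left _ ⟨q, rfl⟩))))
  simpa [km, PresentedGroup.of, map_mul] using this

lemma km_comm (q r : KMQuad n) (h : (q.toFinset ∩ r.toFinset).card ≤ 2) :
    Commute (km q) (km r) := by
  have := pg_rel_one (rels := kmRels n)
    (Set.mem_union_left _ (Set.mem_union_left _ (Set.mem_union_left _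
      (Set.mem_union_right _ ⟨q, r, h, rfl⟩))))
  have h1 : km q * km r * (km q)⁻¹ * (km r)⁻¹ = 1 := by
    simpa [km, PresentedGroup.of, map_mul, map_inv] using this
  unfold Commute SemiconjBy
  exact mul_inv_eq_one.mp (by simpa [mul_inv_rev, mul_assoc] using h1)

lemma km_pent (a b c d e : Fin n) (h : ([a, b, c, d, e] : List (Fin n)).Nodup)
    (h₁ : ([a, b, c, d] : List (Fin n)).Nodup)
    (h₂ : ([a, b, d, e] : List (Fin n)).Nodup)
    (h₃ : ([b, c, d, e] : List (Fin n)).Nodup)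
    (h₄ : ([a, b, c, e] : List (Fin n)).Nodup)
    (h₅ : ([a, c, d, e] : List (Fin n)).Nodup) :
    kmg a b c d h₁ * kmg a b d e h₂ * kmg b c d e h₃ * kmg a b c e h₄ * kmg a c d e h₅ = 1 := by
  have := pg_rel_one (rels := kmRels n)
    (Set.mem_union_left _ (Set.mem_union_left _ (Set.mem_union_right _
      ⟨a, b, c, d, e, h, h₁, h₂, h₃, h₄, h₅, rfl⟩)))
  simpa [kmg, kmFree, PresentedGroup.of, map_mul] using this

lemma km_cyc (a b c d : Fin n) (h : ([a, b, c, d] : List (Fin n)).Nodup)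
    (h' : ([b, c, d, a] : List (Fin n)).Nodup) :
    kmg a b c d h = kmg b c d a h' := by
  have := pg_rel_one (rels := kmRels n)
    (Set.mem_union_left _ (Set.mem_union_right _ (⟨⟨a, b, c, d, h⟩, h', rfl⟩ :
      ∃ (q : KMQuad n) (hq : ([q.j, q.k, q.l, q.i] : List (Fin n)).Nodup),
        _ = FreeGroup.of q * (kmFree q.j q.k q.l q.i hq)⁻¹)))
  have h1 : kmg a b c d h * (kmg b c d a h')⁻¹ = 1 := by
    simpa [kmg, kmFree, PresentedGroup.of, map_mul, map_inv] using this
  exact mul_inv_eq_one.mp h1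

lemma km_rev (a b c d : Fin n) (h : ([a, b, c, d] : List (Fin n)).Nodup)
    (h' : ([d, c, b, a] : List (Fin n)).Nodup) :
    kmg a b c d h = kmg d c b a h' := by
  have := pg_rel_one (rels := kmRels n)
    (Set.mem_union_right _ (⟨⟨a, b, c, d, h⟩, h', rfl⟩ :
      ∃ (q : KMQuad n) (hq : ([q.l, q.k, q.j, q.i] : List (Fin n)).Nodup),
        _ = FreeGroup.of q * (kmFree q.l q.k q.j q.i hq)⁻¹))
  have h1 : kmg a b c d h * (kmg d c b a h')⁻¹ = 1 := by
    simpa [kmg, kmFree, PresentedGroup.of, map_mul, map_inv] using this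
  exact mul_inv_eq_one.mp h1

lemma nodup4 {a b c d : Fin n} (h1 : a ≠ b) (h2 : a ≠ c) (h3 : a ≠ d)
    (h4 : b ≠ c) (h5 : b ≠ d) (h6 : c ≠ d) : ([a, b, c, d] : List (Fin n)).Nodup := by
  simp [List.nodup_cons, h1, h2, h3, h4, h5, h6]

lemma nodup5 {a b c d e : Fin n} (h1 : a ≠ b) (h2 : a ≠ c) (h3 : a ≠ d) (h4 : a ≠ e)
    (h5 : b ≠ c) (h6 : b ≠ d) (h7 : b ≠ e) (h8 : c ≠ d) (h9 : c ≠ e) (h10 : d ≠ e) :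
    ([a, b, c, d, e] : List (Fin n)).Nodup := by
  simp [List.nodup_cons, h1, h2, h3, h4, h5, h6, h7, h8, h9, h10]

end Aux

open scoped commutatorElement

/-- For `n ≥ 6` and distinct `i,j,k,l,m,p` in `{1,…,n}`, the equality
`⁅(ikpl),(iklm)⁆ = ⁅(ikpl),(ijkl)⁆` holds in `Γₙ⁴`. -/
theorem KMGamma_comm_eq_two (n : ℕ) (hn : 6 ≤ n) (i j k l m p : Fin n)
    (hd : ([i, j, k, l, m, p] : List (Fin n)).Nodup)
    (h₁ : ([i, k, p, l] : List (Fin n)).Nodup)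
    (h₂ : ([i, k, l, m] : List (Fin n)).Nodup)
    (h₃ : ([i, j, k, l] : List (Fin n)).Nodup) :
    ⁅(kmg i k p l h₁ : KMGamma n), kmg i k l m h₂⁆ =
      ⁅(kmg i k p l h₁ : KMGamma n), kmg i j k l h₃⁆ := by
  simp only [List.nodup_cons, List.mem_cons, List.not_mem_nil, or_false, not_or,
    List.nodup_nil, and_true] at hd
  obtain ⟨⟨hij, hik, hil, him, hip⟩, ⟨hjk, hjl, hjm, hjp⟩, ⟨hkl, hkm, hkp⟩, ⟨hlm, hlp⟩, hmp, -⟩ := hd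
  have hji : j ≠ i := Ne.symm hij; have hki : k ≠ i := Ne.symm hik
  have hli : l ≠ i := Ne.symm hil; have hmi : m ≠ i := Ne.symm him
  have hpi : p ≠ i := Ne.symm hip; have hkj : k ≠ j := Ne.symm hjk
  have hlj : l ≠ j := Ne.symm hjl; have hmj : m ≠ j := Ne.symm hjm
  have hpj : p ≠ j := Ne.symm hjp; have hlk : l ≠ k := Ne.symm hkl
  have hmk : m ≠ k := Ne.symm hkm; have hpk : p ≠ k := Ne.symm hkp
  have hml : m ≠ l := Ne.symm hlm; have hpl : p ≠ l := Ne.symm hlp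
  have hpm : p ≠ m := Ne.symm hmp
  -- nodup lists
  have n5 : ([l, k, j, i, m] : List (Fin n)).Nodup := nodup5 hlk hlj hli hlm hkj hki hkm hji hjm him
  have nlkji : ([l, k, j, i] : List (Fin n)).Nodup := nodup4 hlk hlj hli hkj hki hji
  have nlkim : ([l, k, i, m] : List (Fin n)).Nodup := nodup4 hlk hli hlm hki hkm him
  have nkjim : ([k, j, i, m] : List (Fin n)).Nodup := nodup4 hkj hki hkm hji hjm him
  have nlkjm : ([l, k, j, m] : List (Fin n)).Nodup := nodup4 hlk hlj hlm hkj hkm hjm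
  have nljim : ([l, j, i, m] : List (Fin n)).Nodup := nodup4 hlj hli hlm hji hjm him
  have nklmi : ([k, l, m, i] : List (Fin n)).Nodup := nodup4 hkl hkm hki hlm hli hmi
  have nlmik : ([l, m, i, k] : List (Fin n)).Nodup := nodup4 hlm hli hlk hmi hmk hik
  have nmikl : ([m, i, k, l] : List (Fin n)).Nodup := nodup4 hmi hmk hml hik hil hkl
  -- abbreviations
  set a := kmg i k p l h₁ with ha_def
  set b := kmg i k l m h₂ with hb_def
  set c := kmg i j k l h₃ with hc_def
  set x := kmg k j i m nkjim with hx_def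
  set y := kmg l k j m nlkjm with hy_def
  set z := kmg l j i m nljim with hz_def
  -- identifications via dihedral relations
  have hc' : kmg l k j i nlkji = c := (km_rev i j k l h₃ nlkji).symm
  have hb' : kmg l k i m nlkim = b := by
    rw [hb_def, km_cyc i k l m h₂ nklmi, km_cyc k l m i nklmi nlmik,
      km_cyc l m i k nlmik nmikl, km_rev m i k l nmikl nlkim]
  -- pentagon
  have hpent : c * b * x * y * z = 1 := by
    have := km_pent l k j i m n5 nlkji nlkim nkjim nlkjm nljim
    rwa [hc', hb'] at this
  -- commutations with a
  have hax : Commute a x := by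
    refine (km_comm _ _ ?_).symm
    refine le_trans (Finset.card_le_card (s := _) (t := ({i, k} : Finset (Fin n))) ?_)
      ((Finset.card_insert_le _ _).trans (by simp))
    intro t ht
    simp only [KMQuad.toFinset, Finset.mem_inter, Finset.mem_insert, Finset.mem_singleton] at ht ⊢
    obtain ⟨hu, hv⟩ := ht
    rcases hu with rfl | rfl | rfl | rfl <;> simp_all
  have hay : Commute a y := by
    refine (km_comm _ _ ?_).symm
    refine le_trans (Finset.card_le_card (s := _) (t := ({k, l} : Finset (Fin n))) ?_)
      ((Finset.card_insert_le _ _).trans (by simp))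
    intro t ht
    simp only [KMQuad.toFinset, Finset.mem_inter, Finset.mem_insert, Finset.mem_singleton] at ht ⊢
    obtain ⟨hu, hv⟩ := ht
    rcases hu with rfl | rfl | rfl | rfl <;> simp_all
  have haz : Commute a z := by
    refine (km_comm _ _ ?_).symm
    refine le_trans (Finset.card_le_card (s := _) (t := ({i, l} : Finset (Fin n))) ?_)
      ((Finset.card_insert_le _ _).trans (by simp))
    intro t ht
    simp only [KMQuad.toFinset, Finset.mem_inter, Finset.mem_insert, Finset.mem_singleton] at ht ⊢
    obtain ⟨hu, hv⟩ := ht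
    rcases hu with rfl | rfl | rfl | rfl <;> simp_all
  -- involutions
  have ha2 : a * a = 1 := km_sq _
  have hb2 : b * b = 1 := km_sq _
  have hc2 : c * c = 1 := km_sq _
  have ha' : a⁻¹ = a := inv_eq_of_mul_eq_one_right ha2
  have hbi : b⁻¹ = b := inv_eq_of_mul_eq_one_right hb2
  have hci : c⁻¹ = c := inv_eq_of_mul_eq_one_right hc2
  -- c * b commutes with a
  have hcb : c * b = z⁻¹ * y⁻¹ * x⁻¹ := by
    have : c * b = (x * y * z)⁻¹ := by
      rw [eq_inv_iff_mul_eq_one]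
      simpa [mul_assoc] using hpent
    simpa [mul_inv_rev, mul_assoc] using this
  have hkey : Commute a (c * b) := by
    rw [hcb]
    exact (haz.inv_right.mul_right hay.inv_right).mul_right hax.inv_right
  -- final algebra
  have key : c * (b * a) = a * (c * b) := by
    simpa [mul_assoc] using hkey.symm.eq
  have hba : b * a = c * (a * (c * b)) := by
    calc b * a = (c * c) * (b * a) := by rw [hc2, one_mul]
      _ = c * (c * (b * a)) := by rw [mul_assoc]
      _ = c * (a * (c * b)) := by rw [key]
  have main : b * (a * b) = c * (a * c) := by
    calc b * (a * b) = (b * a) * b := by rw [mul_assoc]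
      _ = (c * (a * (c * b))) * b := by rw [hba]
      _ = c * (a * (c * (b * b))) := by simp only [mul_assoc]
      _ = c * (a * c) := by rw [hb2, mul_one]
  show a * b * a⁻¹ * b⁻¹ = a * c * a⁻¹ * c⁻¹
  rw [ha', hbi, hci]
  simp only [mul_assoc]
  rw [main]
end

section
/- For every integer n ≥ 4, the group Γ_n^4 cannot be generated by fewer than C(n,3) − 1 elements: every generating set of Γ_n^4 has at least C(n,3) − 1 elements. -/
namespace KMAux


variable {n : ℕ}

abbrev W (n : ℕ) := Finset (Fin n) → ZMod 2

def tpart (Q : Finset (Fin n)) : W n := fun A => if A.card = 3 ∧ A ⊆ Q then 1 else 0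
def eind (C : Finset (Fin n)) : W n := fun A => if A = C then 1 else 0

def phi0 (q : KMQuad n) : W n := tpart q.toFinset + eind {q.i, q.k} + eind {q.j, q.l}

lemma zmod2_add_self : ∀ y : ZMod 2, y + y = 0 := by decide

lemma W_add_self (x : W n) : x + x = 0 := funext fun A => zmod2_add_self (x A)

lemma eind_pair_comm (a b : Fin n) : eind ({a, b} : Finset (Fin n)) = eind {b, a} := by
  rw [Finset.pair_comm]

lemma phi0_mk (a b c d : Fin n) (h : ([a,b,c,d] : List (Fin n)).Nodup) :
    phi0 ⟨a, b, c, d, h⟩ = tpart {a, b, c, d} + eind {a, c} + eind {b, d} := rfl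

lemma phi0_rot (a b c d : Fin n) (h : ([a,b,c,d] : List (Fin n)).Nodup)
    (h' : ([b,c,d,a] : List (Fin n)).Nodup) :
    phi0 ⟨b, c, d, a, h'⟩ = phi0 ⟨a, b, c, d, h⟩ := by
  rw [phi0_mk, phi0_mk]
  rw [show ({b,c,d,a} : Finset (Fin n)) = {a,b,c,d} by ext x; simp; tauto]
  rw [eind_pair_comm c a]
  abel

lemma phi0_rev (a b c d : Fin n) (h : ([a,b,c,d] : List (Fin n)).Nodup)
    (h' : ([d,c,b,a] : List (Fin n)).Nodup) :
    phi0 ⟨d, c, b, a, h'⟩ = phi0 ⟨a, b, c, d, h⟩ := by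
  rw [phi0_mk, phi0_mk]
  rw [show ({d,c,b,a} : Finset (Fin n)) = {a,b,c,d} by ext x; simp; tauto]
  rw [eind_pair_comm d b, eind_pair_comm c a]
  abel

set_option maxHeartbeats 1000000

lemma pent_alg : ∀ t1 t2 t3 t4 t5 pa pb pc pd pe : ZMod 2, t1+t2+t3+t4+t5 = 0 →
    (t1+pa+pb)+(t2+pc+pd)+(t3+pb+pe)+(t4+pa+pd)+(t5+pc+pe) = 0 := by decide

lemma tpart_pent (i j k l m : Fin n) (h : ([i,j,k,l,m] : List (Fin n)).Nodup)
    (A : Finset (Fin n)) :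
    tpart {i,j,k,l} A + tpart {i,j,l,m} A + tpart {j,k,l,m} A + tpart {i,j,k,m} A +
      tpart {i,k,l,m} A = 0 := by
  simp only [List.nodup_cons, List.mem_cons, List.mem_singleton, not_or,
    List.not_mem_nil, not_false_iff, List.nodup_nil, and_true] at h
  obtain ⟨⟨hij, hik, hil, him⟩, ⟨hjk, hjl, hjm⟩, ⟨hkl, hkm⟩, hlm⟩ := h
  have hji := Ne.symm hij; have hki := Ne.symm hik; have hli := Ne.symm hil
  have hmi := Ne.symm him; have hkj := Ne.symm hjk; have hlj := Ne.symm hjl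
  have hmj := Ne.symm hjm; have hlk := Ne.symm hkl; have hmk := Ne.symm hkm
  have hml := Ne.symm hlm
  have hQ1 : ({i,j,k,l} : Finset (Fin n)) = ({i,j,k,l,m} : Finset (Fin n)).erase m := by
    ext x
    simp only [Finset.mem_insert, Finset.mem_singleton, Finset.mem_erase]
    constructor
    · rintro (rfl|rfl|rfl|rfl) <;> exact ⟨by assumption, by tauto⟩
    · rintro ⟨hne, (rfl|rfl|rfl|rfl|rfl)⟩ <;> tauto
  have hQ2 : ({i,j,l,m} : Finset (Fin n)) = ({i,j,k,l,m} : Finset (Fin n)).erase k := by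
    ext x
    simp only [Finset.mem_insert, Finset.mem_singleton, Finset.mem_erase]
    constructor
    · rintro (rfl|rfl|rfl|rfl) <;> exact ⟨by assumption, by tauto⟩
    · rintro ⟨hne, (rfl|rfl|rfl|rfl|rfl)⟩ <;> tauto
  have hQ3 : ({j,k,l,m} : Finset (Fin n)) = ({i,j,k,l,m} : Finset (Fin n)).erase i := by
    ext x
    simp only [Finset.mem_insert, Finset.mem_singleton, Finset.mem_erase]
    constructor
    · rintro (rfl|rfl|rfl|rfl) <;> exact ⟨by assumption, by tauto⟩
    · rintro ⟨hne, (rfl|rfl|rfl|rfl|rfl)⟩ <;> tauto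
  have hQ4 : ({i,j,k,m} : Finset (Fin n)) = ({i,j,k,l,m} : Finset (Fin n)).erase l := by
    ext x
    simp only [Finset.mem_insert, Finset.mem_singleton, Finset.mem_erase]
    constructor
    · rintro (rfl|rfl|rfl|rfl) <;> exact ⟨by assumption, by tauto⟩
    · rintro ⟨hne, (rfl|rfl|rfl|rfl|rfl)⟩ <;> tauto
  have hQ5 : ({i,k,l,m} : Finset (Fin n)) = ({i,j,k,l,m} : Finset (Fin n)).erase j := by
    ext x
    simp only [Finset.mem_insert, Finset.mem_singleton, Finset.mem_erase]
    constructor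
    · rintro (rfl|rfl|rfl|rfl) <;> exact ⟨by assumption, by tauto⟩
    · rintro ⟨hne, (rfl|rfl|rfl|rfl|rfl)⟩ <;> tauto
  by_cases hA : A.card = 3 ∧ A ⊆ ({i,j,k,l,m} : Finset (Fin n))
  · have key : ∀ x : Fin n,
        tpart (({i,j,k,l,m} : Finset (Fin n)).erase x) A = 1 + (if x ∈ A then 1 else 0) := by
      intro x
      simp only [tpart, Finset.subset_erase, hA.1, hA.2, true_and, and_true]
      by_cases hx : x ∈ A
      · simp [hx]; decide
      · simp [hx]
    have e2 : ({i,j,k,l,m} : Finset (Fin n)).filter (· ∈ A) = A := by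
      rw [Finset.filter_mem_eq_inter, Finset.inter_eq_right.mpr hA.2]
    have e1 : ∑ x ∈ ({i,j,k,l,m} : Finset (Fin n)), (if x ∈ A then (1:ZMod 2) else 0) = 1 := by
      rw [Finset.sum_boole, e2, hA.1]
      decide
    rw [Finset.sum_insert (by simp [hij, hik, hil, him]),
        Finset.sum_insert (by simp [hjk, hjl, hjm]),
        Finset.sum_insert (by simp [hkl, hkm]),
        Finset.sum_insert (by simp [hlm]),
        Finset.sum_singleton] at e1
    have k1 : tpart {i,j,k,l} A = 1 + (if m ∈ A then 1 else 0) := by rw [hQ1]; exact key m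
    have k2 : tpart {i,j,l,m} A = 1 + (if k ∈ A then 1 else 0) := by rw [hQ2]; exact key k
    have k3 : tpart {j,k,l,m} A = 1 + (if i ∈ A then 1 else 0) := by rw [hQ3]; exact key i
    have k4 : tpart {i,j,k,m} A = 1 + (if l ∈ A then 1 else 0) := by rw [hQ4]; exact key l
    have k5 : tpart {i,k,l,m} A = 1 + (if j ∈ A then 1 else 0) := by rw [hQ5]; exact key j
    rw [k1, k2, k3, k4, k5]
    revert e1
    generalize (if i ∈ A then (1:ZMod 2) else 0) = ci
    generalize (if j ∈ A then (1:ZMod 2) else 0) = cj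
    generalize (if k ∈ A then (1:ZMod 2) else 0) = ck
    generalize (if l ∈ A then (1:ZMod 2) else 0) = cl
    generalize (if m ∈ A then (1:ZMod 2) else 0) = cm
    revert ci cj ck cl cm
    decide
  · have key : ∀ x : Fin n, tpart (({i,j,k,l,m} : Finset (Fin n)).erase x) A = 0 := by
      intro x
      simp only [tpart, ite_eq_right_iff]
      rintro ⟨h1, h2⟩
      exact absurd ⟨h1, h2.trans (Finset.erase_subset _ _)⟩ hA
    have k1 : tpart {i,j,k,l} A = 0 := by rw [hQ1]; exact key m
    have k2 : tpart {i,j,l,m} A = 0 := by rw [hQ2]; exact key k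
    have k3 : tpart {j,k,l,m} A = 0 := by rw [hQ3]; exact key i
    have k4 : tpart {i,j,k,m} A = 0 := by rw [hQ4]; exact key l
    have k5 : tpart {i,k,l,m} A = 0 := by rw [hQ5]; exact key j
    rw [k1, k2, k3, k4, k5]
    decide


lemma phi0_pentagon {n : ℕ} (i j k l m : Fin n) (h : ([i,j,k,l,m] : List (Fin n)).Nodup)
    (h₁ : ([i, j, k, l] : List (Fin n)).Nodup)
    (h₂ : ([i, j, l, m] : List (Fin n)).Nodup)
    (h₃ : ([j, k, l, m] : List (Fin n)).Nodup)
    (h₄ : ([i, j, k, m] : List (Fin n)).Nodup)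
    (h₅ : ([i, k, l, m] : List (Fin n)).Nodup) :
    phi0 ⟨i,j,k,l,h₁⟩ + phi0 ⟨i,j,l,m,h₂⟩ + phi0 ⟨j,k,l,m,h₃⟩ + phi0 ⟨i,j,k,m,h₄⟩ +
      phi0 ⟨i,k,l,m,h₅⟩ = 0 := by
  funext A
  have hts := tpart_pent i j k l m h A
  show (tpart {i,j,k,l} A + eind {i,k} A + eind {j,l} A)
      + (tpart {i,j,l,m} A + eind {i,l} A + eind {j,m} A)
      + (tpart {j,k,l,m} A + eind {j,l} A + eind {k,m} A)
      + (tpart {i,j,k,m} A + eind {i,k} A + eind {j,m} A)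
      + (tpart {i,k,l,m} A + eind {i,l} A + eind {k,m} A) = 0
  exact pent_alg _ _ _ _ _ _ _ _ _ _ hts

lemma lift_rels (n : ℕ) :
    ∀ r ∈ kmRels n,
      FreeGroup.lift (fun q : KMQuad n => Multiplicative.ofAdd (phi0 q)) r = 1 := by
  intro r hr
  simp only [kmRels, Set.mem_union, Set.mem_setOf_eq] at hr
  rcases hr with ((((hr | hr) | hr) | hr) | hr)
  · obtain ⟨q, rfl⟩ := hr
    rw [map_mul, FreeGroup.lift_apply_of]
    rw [← ofAdd_add, W_add_self, ofAdd_zero]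
  · obtain ⟨q, r', hcard, rfl⟩ := hr
    simp only [map_mul, map_inv, FreeGroup.lift_apply_of]
    rw [mul_comm (Multiplicative.ofAdd (phi0 q)) (Multiplicative.ofAdd (phi0 r'))]
    group
  · obtain ⟨i, j, k, l, m, hnd, h₁, h₂, h₃, h₄, h₅, rfl⟩ := hr
    simp only [kmFree, map_mul, FreeGroup.lift_apply_of]
    rw [← ofAdd_add, ← ofAdd_add, ← ofAdd_add, ← ofAdd_add,
      phi0_pentagon i j k l m hnd h₁ h₂ h₃ h₄ h₅, ofAdd_zero]
  · obtain ⟨q, h, rfl⟩ := hr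
    simp only [kmFree, map_mul, map_inv, FreeGroup.lift_apply_of]
    have e : phi0 (⟨q.j, q.k, q.l, q.i, h⟩ : KMQuad n) = phi0 q :=
      phi0_rot q.i q.j q.k q.l q.nodup h
    rw [e]
    group
  · obtain ⟨q, h, rfl⟩ := hr
    simp only [kmFree, map_mul, map_inv, FreeGroup.lift_apply_of]
    have e : phi0 (⟨q.l, q.k, q.j, q.i, h⟩ : KMQuad n) = phi0 q :=
      phi0_rev q.i q.j q.k q.l q.nodup h
    rw [e]
    group

noncomputable def Phi (n : ℕ) : KMGamma n →* Multiplicative (W n) :=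
  PresentedGroup.toGroup (lift_rels n)

lemma Phi_of {n : ℕ} (q : KMQuad n) :
    Phi n (PresentedGroup.of q) = Multiplicative.ofAdd (phi0 q) :=
  PresentedGroup.toGroup.of (lift_rels n)

end KMAux

namespace KMAux

def R (n : ℕ) : Submodule (ZMod 2) (W n) :=
  Submodule.span (ZMod 2) (Set.range (phi0 (n := n)))

variable {n : ℕ}

lemma nodup4 {a b c d : Fin n} (hab : a ≠ b) (hac : a ≠ c) (had : a ≠ d)
    (hbc : b ≠ c) (hbd : b ≠ d) (hcd : c ≠ d) : ([a,b,c,d] : List (Fin n)).Nodup := by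
  simp [hab, hac, had, hbc, hbd, hcd]

lemma eind_ne {C B : Finset (Fin n)} (h : B ≠ C) : eind C B = 0 := if_neg h

lemma eind_mem_ne {C B : Finset (Fin n)} {x : Fin n} (hx : x ∈ C) (hB : x ∉ B) :
    eind C B = 0 := eind_ne (fun h => hB (h ▸ hx))

lemma tpart_z {z a b c : Fin n} (hab : a ≠ b) (hac : a ≠ c) (hbc : b ≠ c)
    {B : Finset (Fin n)} (hzB : z ∉ B) :
    tpart {z, a, b, c} B = eind {a, b, c} B := by
  have hcard : ({a,b,c} : Finset (Fin n)).card = 3 := by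
    rw [Finset.card_insert_of_notMem (by simp [hab, hac]),
        Finset.card_insert_of_notMem (by simp [hbc]), Finset.card_singleton]
  unfold tpart eind
  by_cases h : B = ({a,b,c} : Finset (Fin n))
  · rw [if_pos h, if_pos]
    subst h
    exact ⟨hcard, by intro x hx; simp at hx ⊢; tauto⟩
  · rw [if_neg h, if_neg]
    rintro ⟨h3, hsub⟩
    have hBsub : B ⊆ ({a,b,c} : Finset (Fin n)) := by
      intro x hx
      have hxm := hsub hx
      simp only [Finset.mem_insert, Finset.mem_singleton] at hxm ⊢
      rcases hxm with rfl | h'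
      · exact absurd hx hzB
      · exact h'
    exact h (Finset.eq_of_subset_of_card_le hBsub (by rw [hcard, h3]))

lemma H_spec {z x a b : Fin n} (hzx : z ≠ x) (hza : z ≠ a) (hzb : z ≠ b)
    (hxa : x ≠ a) (hxb : x ≠ b) (hab : a ≠ b) :
    ∃ w ∈ R n, ∀ B : Finset (Fin n), z ∉ B →
      w B = eind {x, a} B + eind {x, b} B := by
  refine ⟨phi0 ⟨z, x, a, b, nodup4 hzx hza hzb hxa hxb hab⟩ +
      phi0 ⟨z, x, b, a, nodup4 hzx hzb hza hxb hxa hab.symm⟩,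
    add_mem (Submodule.subset_span ⟨_, rfl⟩) (Submodule.subset_span ⟨_, rfl⟩), ?_⟩
  intro B hzB
  show (tpart {z,x,a,b} B + eind {z,a} B + eind {x,b} B)
      + (tpart {z,x,b,a} B + eind {z,b} B + eind {x,a} B)
      = eind {x, a} B + eind {x, b} B
  have h1 : ({z,x,b,a} : Finset (Fin n)) = {z,x,a,b} := by ext y; simp; tauto
  rw [h1, eind_mem_ne (Finset.mem_insert_self z {a}) hzB,
      eind_mem_ne (Finset.mem_insert_self z {b}) hzB]
  have h2 := zmod2_add_self (tpart {z,x,a,b} B)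
  linear_combination h2

lemma pw_exists {z o t : Fin n} (hzo : z ≠ o) (hzt : z ≠ t) (hot : o ≠ t)
    {a b : Fin n} (ha : a ≠ z) (hb : b ≠ z) (hab : a ≠ b) :
    ∃ w ∈ R n, ∀ B : Finset (Fin n), z ∉ B → B ≠ ({o, t} : Finset (Fin n)) →
      w B = eind {a, b} B := by
  by_cases hao : a = o
  · subst hao
    by_cases hbt : b = t
    · subst hbt
      exact ⟨0, zero_mem _, fun B _ hB2 => by rw [eind_ne hB2]; rfl⟩
    · obtain ⟨w, hw, hspec⟩ := H_spec (z := z) (x := a) (a := b) (b := t)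
        hzo (Ne.symm hb) hzt hab hot hbt
      exact ⟨w, hw, fun B h1 h2 => by rw [hspec B h1, eind_ne h2, add_zero]⟩
  · by_cases hbo : b = o
    · subst hbo
      by_cases hat : a = t
      · subst hat
        refine ⟨0, zero_mem _, fun B _ hB2 => ?_⟩
        rw [eind_ne (fun h => hB2 (h.trans (Finset.pair_comm a b)))]; rfl
      · obtain ⟨w, hw, hspec⟩ := H_spec (z := z) (x := b) (a := a) (b := t)
          hzo (Ne.symm ha) hzt (Ne.symm hab) hot hat
        refine ⟨w, hw, fun B h1 h2 => ?_⟩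
        rw [hspec B h1, eind_ne h2, add_zero, Finset.pair_comm b a]
    · by_cases hat : a = t
      · subst hat
        obtain ⟨w, hw, hspec⟩ := H_spec (z := z) (x := a) (a := b) (b := o)
          hzt (Ne.symm hb) hzo hab (fun h => hao h) (fun h => hbo h)
        refine ⟨w, hw, fun B h1 h2 => ?_⟩
        have h2' : B ≠ ({a, o} : Finset (Fin n)) :=
          fun h => h2 (h.trans (Finset.pair_comm a o))
        rw [hspec B h1, eind_ne h2', add_zero]
      · by_cases hbt : b = t
        · subst hbt
          obtain ⟨w, hw, hspec⟩ := H_spec (z := z) (x := b) (a := a) (b := o)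
            hzt (Ne.symm ha) hzo (Ne.symm hab) (fun h => hbo h) (fun h => hao h)
          refine ⟨w, hw, fun B h1 h2 => ?_⟩
          have h2' : B ≠ ({b, o} : Finset (Fin n)) :=
            fun h => h2 (h.trans (Finset.pair_comm b o))
          rw [hspec B h1, eind_ne h2', add_zero, Finset.pair_comm b a]
        · obtain ⟨w1, hw1, hs1⟩ := H_spec (z := z) (x := a) (a := b) (b := o)
            (Ne.symm ha) (Ne.symm hb) hzo hab (fun h => hao h) (fun h => hbo h)
          obtain ⟨w2, hw2, hs2⟩ := H_spec (z := z) (x := o) (a := a) (b := t)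
            hzo (Ne.symm ha) hzt (fun h => hao h.symm) hot hat
          refine ⟨w1 + w2, add_mem hw1 hw2, fun B h1 h2 => ?_⟩
          have he : (w1 + w2) B = w1 B + w2 B := rfl
          rw [he, hs1 B h1, hs2 B h1, eind_ne h2, Finset.pair_comm o a]
          have h3 := zmod2_add_self (eind {a, o} B)
          linear_combination h3

end KMAux

namespace KMAux

lemma wit_exists {n : ℕ} {z o t : Fin n} (hzo : z ≠ o) (hzt : z ≠ t) (hot : o ≠ t)
    {C : Finset (Fin n)} (hzC : z ∉ C) (hcard : C.card = 3 ∨ C.card = 2) :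
    ∃ w ∈ R n, ∀ B : Finset (Fin n), z ∉ B → B ≠ ({o, t} : Finset (Fin n)) →
      w B = eind C B := by
  rcases hcard with h3 | h2
  · obtain ⟨a, b, c, hab, hac, hbc, rfl⟩ := Finset.card_eq_three.mp h3
    have hza : z ≠ a := fun h => hzC (by simp [h])
    have hzb : z ≠ b := fun h => hzC (by simp [h])
    have hzc : z ≠ c := fun h => hzC (by simp [h])
    obtain ⟨w2, hw2, hs2⟩ := pw_exists hzo hzt hot (Ne.symm hza) (Ne.symm hzc) hac
    refine ⟨phi0 ⟨z, a, b, c, nodup4 hza hzb hzc hab hac hbc⟩ + w2,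
      add_mem (Submodule.subset_span ⟨_, rfl⟩) hw2, fun B h1 h2 => ?_⟩
    have he : (phi0 ⟨z, a, b, c, nodup4 hza hzb hzc hab hac hbc⟩ + w2) B
        = (tpart {z,a,b,c} B + eind {z,b} B + eind {a,c} B) + w2 B := rfl
    rw [he, hs2 B h1 h2, tpart_z hab hac hbc h1,
      eind_mem_ne (Finset.mem_insert_self z {b}) h1]
    have h3' := zmod2_add_self (eind {a, c} B)
    linear_combination h3'
  · obtain ⟨a, b, hab, rfl⟩ := Finset.card_eq_two.mp h2
    have hza : z ≠ a := fun h => hzC (by simp [h])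
    have hzb : z ≠ b := fun h => hzC (by simp [h])
    obtain ⟨w, hw, hs⟩ := pw_exists hzo hzt hot (Ne.symm hza) (Ne.symm hzb) hab
    exact ⟨w, hw, hs⟩

end KMAux

/-- For every `n ≥ 4`, the group `Γₙ⁴` cannot be generated by fewer than
`(n choose 3) - 1` elements: every finite generating set has at least that many
elements. -/
theorem KMGamma_rank_lower_bound (n : ℕ) (hn : 4 ≤ n) :
    ∀ S : Finset (KMGamma n),
      Subgroup.closure (S : Set (KMGamma n)) = ⊤ →
      n.choose 3 - 1 ≤ S.card := by
  classical
  intro S hS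
  set z : Fin n := ⟨0, by omega⟩ with hz
  set o : Fin n := ⟨1, by omega⟩ with ho
  set t : Fin n := ⟨2, by omega⟩ with ht
  have hzo : z ≠ o := by simp [hz, ho, Fin.ext_iff]
  have hzt : z ≠ t := by simp [hz, ht, Fin.ext_iff]
  have hot : o ≠ t := by simp [ho, ht, Fin.ext_iff]
  set g : KMGamma n → KMAux.W n := fun γ => Multiplicative.toAdd (KMAux.Phi n γ) with hg
  set P : Submodule (ZMod 2) (KMAux.W n) := Submodule.span (ZMod 2) (g '' ↑S) with hP
  -- every value of g lies in P
  have hKsub : ∀ γ : KMGamma n, g γ ∈ P := by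
    let K : Subgroup (KMGamma n) :=
      { carrier := {γ | g γ ∈ P}
        one_mem' := by
          show g 1 ∈ P
          have : g 1 = 0 := by simp [hg]
          rw [this]; exact P.zero_mem
        mul_mem' := by
          intro x y hx hy
          show g (x * y) ∈ P
          have : g (x * y) = g x + g y := by simp [hg]
          rw [this]; exact P.add_mem hx hy
        inv_mem' := by
          intro x hx
          show g x⁻¹ ∈ P
          have : g x⁻¹ = - g x := by simp [hg]
          rw [this]; exact P.neg_mem hx }
    have hcl : Subgroup.closure (S : Set (KMGamma n)) ≤ K :=
      (Subgroup.closure_le K).mpr (fun s hs => Submodule.subset_span ⟨s, hs, rfl⟩)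
    intro γ
    exact hcl (hS ▸ Subgroup.mem_top γ)
  have hphiP : ∀ q : KMQuad n, KMAux.phi0 q ∈ P := by
    intro q
    have h1 := hKsub (PresentedGroup.of q)
    have h2 : g (PresentedGroup.of q) = KMAux.phi0 q := by
      rw [hg]; simp only []
      rw [KMAux.Phi_of]; rfl
    rwa [h2] at h1
  have hRP : KMAux.R n ≤ P :=
    Submodule.span_le.mpr (by rintro _ ⟨q, rfl⟩; exact hphiP q)
  -- the coordinate set X
  set X : Finset (Finset (Fin n)) :=
    ((Finset.univ.erase z).powersetCard 3) ∪
      (((Finset.univ.erase z).powersetCard 2).erase {o, t}) with hX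
  have hotcard : ({o, t} : Finset (Fin n)).card = 2 := by
    rw [Finset.card_insert_of_notMem (by simp [hot]), Finset.card_singleton]
  have hmemX : ∀ B : Finset (Fin n),
      B ∈ X ↔ (z ∉ B ∧ B ≠ ({o, t} : Finset (Fin n)) ∧ (B.card = 3 ∨ B.card = 2)) := by
    intro B
    rw [hX]
    simp only [Finset.mem_union, Finset.mem_erase, Finset.mem_powersetCard]
    constructor
    · rintro (⟨hsub, h3⟩ | ⟨hne, hsub, h2⟩)
      · refine ⟨fun hzB => by simpa using (hsub hzB), fun hBot => ?_, Or.inl h3⟩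
        rw [hBot, hotcard] at h3; omega
      · exact ⟨fun hzB => by simpa using (hsub hzB), hne, Or.inr h2⟩
    · rintro ⟨hzB, hBot, (h3 | h2)⟩
      · exact Or.inl ⟨fun x hx => Finset.mem_erase.mpr
          ⟨fun h => hzB (h ▸ hx), Finset.mem_univ _⟩, h3⟩
      · exact Or.inr ⟨hBot, fun x hx => Finset.mem_erase.mpr
          ⟨fun h => hzB (h ▸ hx), Finset.mem_univ _⟩, h2⟩
  have hXcard : X.card = n.choose 3 - 1 := by
    have hucard : (Finset.univ.erase z).card = n - 1 := by
      rw [Finset.card_erase_of_mem (Finset.mem_univ z), Finset.card_univ, Fintype.card_fin]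
    have hc1 : ((Finset.univ.erase z).powersetCard 3).card = (n-1).choose 3 := by
      rw [Finset.card_powersetCard, hucard]
    have hotmem : ({o, t} : Finset (Fin n)) ∈ (Finset.univ.erase z).powersetCard 2 := by
      rw [Finset.mem_powersetCard]
      refine ⟨?_, hotcard⟩
      intro x hx
      simp only [Finset.mem_insert, Finset.mem_singleton] at hx
      rcases hx with rfl | rfl
      · exact Finset.mem_erase.mpr ⟨Ne.symm hzo, Finset.mem_univ _⟩
      · exact Finset.mem_erase.mpr ⟨Ne.symm hzt, Finset.mem_univ _⟩
    have hc2 : (((Finset.univ.erase z).powersetCard 2).erase {o, t}).card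
        = (n-1).choose 2 - 1 := by
      rw [Finset.card_erase_of_mem hotmem, Finset.card_powersetCard, hucard]
    have hdisj : Disjoint ((Finset.univ.erase z).powersetCard 3)
        (((Finset.univ.erase z).powersetCard 2).erase {o, t}) := by
      rw [Finset.disjoint_left]
      intro B hB1 hB2
      have h3 := (Finset.mem_powersetCard.mp hB1).2
      have h2 := (Finset.mem_powersetCard.mp (Finset.mem_of_mem_erase hB2)).2
      omega
    rw [hX, Finset.card_union_of_disjoint hdisj, hc1, hc2]
    obtain ⟨m, rfl⟩ : ∃ m, n = m + 1 := ⟨n - 1, by omega⟩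
    have hp : (m+1).choose 3 = m.choose 2 + m.choose 3 := Nat.choose_succ_succ m 2
    have hpos : 1 ≤ m.choose 2 := Nat.choose_pos (by omega)
    simp only [Nat.add_sub_cancel]
    omega
  -- witnesses
  have hwit : ∀ C : {C // C ∈ X}, ∃ w, w ∈ P ∧
      ∀ B : Finset (Fin n), z ∉ B → B ≠ ({o, t} : Finset (Fin n)) →
        w B = KMAux.eind (↑C) B := by
    intro C
    obtain ⟨hzC, _, hcard⟩ := (hmemX _).mp C.2
    obtain ⟨w, hwR, hspec⟩ := KMAux.wit_exists hzo hzt hot hzC hcard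
    exact ⟨w, hRP hwR, hspec⟩
  choose v hvP hvE using hwit
  -- linear independence
  have hli : LinearIndependent (ZMod 2) v := by
    rw [linearIndependent_iff']
    intro s coef hsum j hjs
    have hj := (hmemX _).mp j.2
    have happ := congrFun hsum (↑j : Finset (Fin n))
    rw [Finset.sum_apply] at happ
    have hterm : ∀ i : {C // C ∈ X},
        (coef i • v i) (↑j : Finset (Fin n))
          = coef i * (if (↑j : Finset (Fin n)) = ↑i then 1 else 0) := by
      intro i
      have : (coef i • v i) (↑j : Finset (Fin n)) = coef i * (v i ↑j) := rfl
      rw [this, hvE i ↑j hj.1 hj.2.1]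
      rfl
    rw [Finset.sum_congr rfl (fun i _ => hterm i)] at happ
    rw [Finset.sum_eq_single j (fun i _ hij =>
      by rw [if_neg (fun h => hij (Subtype.ext h.symm)), mul_zero])
      (fun h => absurd hjs h)] at happ
    rw [if_pos rfl, mul_one] at happ
    exact happ.symm ▸ rfl
  -- conclude via finrank
  have hli' : LinearIndependent (ZMod 2)
      (fun C : {C // C ∈ X} => (⟨v C, hvP C⟩ : P)) := by
    apply LinearIndependent.of_comp P.subtype
    exact hli
  have hfin : Fintype.card {C // C ∈ X} ≤ Module.finrank (ZMod 2) P :=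
    hli'.fintype_card_le_finrank
  have hcoe : Fintype.card {C // C ∈ X} = X.card := Fintype.card_coe X
  have hspan : Module.finrank (ZMod 2) P ≤ (S.image g).card := by
    have he : P = Submodule.span (ZMod 2) ((S.image g : Finset (KMAux.W n)) : Set (KMAux.W n)) := by
      rw [hP, Finset.coe_image]
    rw [he]
    exact finrank_span_finset_le_card _
  have himg : (S.image g).card ≤ S.card := Finset.card_image_le
  omega
end

section
/- The group Γ_4^4 is isomorphic to the free product (Z/2Z) * (Z/2Z) * (Z/2Z) of three copies of the cyclic group of order 2, with the three free factors generated by the images of (1234), (1324) and (1243) respectively. -/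
namespace KMFour

abbrev M : Fin 3 → Type := fun _ => Multiplicative (ZMod 2)

/-- classification of quadruples by the partner of `0`. -/
def cls0 (i j k l : Fin 4) : Fin 3 :=
  let p : Fin 4 := if i = 0 then k else if j = 0 then l else if k = 0 then i else j
  if p = 1 then 1 else if p = 2 then 0 else 2

lemma nodup_cycle {i j k l : Fin 4} (h : ([i, j, k, l] : List (Fin 4)).Nodup) :
    ([j, k, l, i] : List (Fin 4)).Nodup := by revert i j k l; decide

lemma nodup_rev {i j k l : Fin 4} (h : ([i, j, k, l] : List (Fin 4)).Nodup) :
    ([l, k, j, i] : List (Fin 4)).Nodup := by revert i j k l; decide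

lemma cls0_cycle : ∀ i j k l : Fin 4, ([i, j, k, l] : List (Fin 4)).Nodup →
    cls0 j k l i = cls0 i j k l := by decide

lemma cls0_rev : ∀ i j k l : Fin 4, ([i, j, k, l] : List (Fin 4)).Nodup →
    cls0 l k j i = cls0 i j k l := by decide

lemma quad_univ : ∀ i j k l : Fin 4, ([i, j, k, l] : List (Fin 4)).Nodup →
    ({i, j, k, l} : Finset (Fin 4)) = Finset.univ := by decide

lemma no_pent : ∀ i j k l m : Fin 4, ¬ ([i, j, k, l, m] : List (Fin 4)).Nodup := by decide

lemma rels_one {w : FreeGroup (KMQuad 4)} (hw : w ∈ kmRels 4) :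
    PresentedGroup.mk (kmRels 4) w = 1 :=
  (QuotientGroup.eq_one_iff _).mpr (Subgroup.subset_normalClosure hw)

lemma km_sq (q : KMQuad 4) : km q * km q = 1 := by
  have h := rels_one (Or.inl (Or.inl (Or.inl (Or.inl ⟨q, rfl⟩))))
  rw [map_mul] at h
  exact h

lemma km_cycle (i j k l : Fin 4) (h : ([i, j, k, l] : List (Fin 4)).Nodup) :
    kmg i j k l h = kmg j k l i (nodup_cycle h) := by
  have hm : (FreeGroup.of (⟨i, j, k, l, h⟩ : KMQuad 4) *
      (kmFree j k l i (nodup_cycle h))⁻¹) ∈ kmRels 4 :=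
    Or.inl (Or.inr ⟨⟨i, j, k, l, h⟩, nodup_cycle h, rfl⟩)
  have h1 := rels_one hm
  rw [map_mul, map_inv] at h1
  exact mul_inv_eq_one.mp h1

lemma km_rev (i j k l : Fin 4) (h : ([i, j, k, l] : List (Fin 4)).Nodup) :
    kmg i j k l h = kmg l k j i (nodup_rev h) := by
  have hm : (FreeGroup.of (⟨i, j, k, l, h⟩ : KMQuad 4) *
      (kmFree l k j i (nodup_rev h))⁻¹) ∈ kmRels 4 :=
    Or.inr ⟨⟨i, j, k, l, h⟩, nodup_rev h, rfl⟩
  have h1 := rels_one hm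
  rw [map_mul, map_inv] at h1
  exact mul_inv_eq_one.mp h1

def rep : Fin 3 → KMGamma 4 := fun c =>
  match c with
  | 0 => kmg 0 1 2 3 (by decide)
  | 1 => kmg 0 2 1 3 (by decide)
  | 2 => kmg 0 1 3 2 (by decide)

lemma km_norm (i j k l : Fin 4) (h : ([i, j, k, l] : List (Fin 4)).Nodup) :
    kmg i j k l h = rep (cls0 i j k l) := by
  fin_cases i <;> fin_cases j <;> fin_cases k <;> fin_cases l <;>
    first
      | exact absurd h (by decide)
      | rfl
      | (rw [km_cycle]; rfl)
      | (rw [km_cycle, km_cycle]; rfl)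
      | (rw [km_cycle, km_cycle, km_cycle]; rfl)
      | (rw [km_rev]; rfl)
      | (rw [km_rev, km_cycle]; rfl)
      | (rw [km_rev, km_cycle, km_cycle]; rfl)
      | (rw [km_rev, km_cycle, km_cycle, km_cycle]; rfl)

lemma rep_sq (c : Fin 3) : rep c * rep c = 1 := by
  fin_cases c <;> exact km_sq _

/-- the hom `Z/2 →* G` determined by an involution. -/
def invHom {G : Type*} [Group G] (g : G) (hg : g * g = 1) : Multiplicative (ZMod 2) →* G where
  toFun x := g ^ (x.toAdd.val)
  map_one' := pow_zero g
  map_mul' x y := by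
    have hc : ∀ x : Multiplicative (ZMod 2), x = 1 ∨ x = Multiplicative.ofAdd 1 := by decide
    rcases hc x with rfl | rfl <;> rcases hc y with rfl | rfl
    · show g ^ 0 = g ^ 0 * g ^ 0; simp
    · show g ^ 1 = g ^ 0 * g ^ 1; simp
    · show g ^ 1 = g ^ 1 * g ^ 0; simp
    · show g ^ 0 = g ^ 1 * g ^ 1; simpa using hg.symm

def F : KMQuad 4 → Monoid.CoprodI M := fun q =>
  Monoid.CoprodI.of (M := M) (i := cls0 q.i q.j q.k q.l) (Multiplicative.ofAdd (1 : ZMod 2))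

lemma hF : ∀ r ∈ kmRels 4, FreeGroup.lift F r = 1 := by
  intro r hr
  rcases hr with ((((⟨q, rfl⟩ | ⟨q, q', hcard, rfl⟩) | ⟨i, j, k, l, m, hnd, _⟩) |
      ⟨q, h', rfl⟩) | ⟨q, h', rfl⟩)
  · rw [map_mul, FreeGroup.lift_apply_of]
    show Monoid.CoprodI.of _ * Monoid.CoprodI.of _ = 1
    rw [← map_mul, show (Multiplicative.ofAdd (1 : ZMod 2)) * Multiplicative.ofAdd 1 = 1
      by decide, map_one]
  · exfalso
    have h1 : q.toFinset = Finset.univ := quad_univ q.i q.j q.k q.l q.nodup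
    have h2 : q'.toFinset = Finset.univ := quad_univ q'.i q'.j q'.k q'.l q'.nodup
    rw [h1, h2] at hcard
    exact absurd hcard (by decide)
  · exact absurd hnd (no_pent i j k l m)
  · rw [map_mul, map_inv, FreeGroup.lift_apply_of]
    show Monoid.CoprodI.of (M := M) (i := cls0 q.i q.j q.k q.l) (Multiplicative.ofAdd 1) *
      (Monoid.CoprodI.of (M := M) (i := cls0 q.j q.k q.l q.i) (Multiplicative.ofAdd 1))⁻¹ = 1
    rw [cls0_cycle q.i q.j q.k q.l q.nodup, mul_inv_cancel]
  · rw [map_mul, map_inv, FreeGroup.lift_apply_of]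
    show Monoid.CoprodI.of (M := M) (i := cls0 q.i q.j q.k q.l) (Multiplicative.ofAdd 1) *
      (Monoid.CoprodI.of (M := M) (i := cls0 q.l q.k q.j q.i) (Multiplicative.ofAdd 1))⁻¹ = 1
    rw [cls0_rev q.i q.j q.k q.l q.nodup, mul_inv_cancel]

noncomputable def fwd : KMGamma 4 →* Monoid.CoprodI M := PresentedGroup.toGroup hF

noncomputable def bwd : Monoid.CoprodI M →* KMGamma 4 :=
  Monoid.CoprodI.lift (fun c => invHom (rep c) (rep_sq c))

lemma bwd_fwd : bwd.comp fwd = MonoidHom.id (KMGamma 4) := by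
  apply PresentedGroup.ext
  intro q
  show bwd (fwd (PresentedGroup.of q)) = PresentedGroup.of q
  rw [show fwd (PresentedGroup.of q) = F q from PresentedGroup.toGroup.of hF]
  show Monoid.CoprodI.lift _ (Monoid.CoprodI.of _) = _
  rw [Monoid.CoprodI.lift_of]
  show rep (cls0 q.i q.j q.k q.l) ^ (1 : ℕ) = _
  rw [pow_one, ← km_norm q.i q.j q.k q.l q.nodup]
  rfl

lemma fwd_rep (c : Fin 3) :
    fwd (rep c) = Monoid.CoprodI.of (M := M) (i := c) (Multiplicative.ofAdd (1 : ZMod 2)) := by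
  fin_cases c <;> exact PresentedGroup.toGroup.of hF

lemma fwd_bwd : fwd.comp bwd = MonoidHom.id (Monoid.CoprodI M) := by
  apply Monoid.CoprodI.ext_hom
  intro c
  refine MonoidHom.ext fun x => ?_
  have hc : ∀ x : Multiplicative (ZMod 2), x = 1 ∨ x = Multiplicative.ofAdd 1 := by decide
  rcases hc x with rfl | rfl
  · simp
  · show fwd (bwd (Monoid.CoprodI.of _)) = _
    rw [show bwd (Monoid.CoprodI.of (M := M) (i := c) (Multiplicative.ofAdd 1)) =
        rep c ^ (1 : ℕ) from Monoid.CoprodI.lift_of _ _]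
    rw [pow_one, fwd_rep]
    rfl

noncomputable def equiv : KMGamma 4 ≃* Monoid.CoprodI M :=
  MonoidHom.toMulEquiv fwd bwd bwd_fwd fwd_bwd

end KMFour

/-- The group `Γ₄⁴` is isomorphic to the free product `(ℤ/2ℤ) * (ℤ/2ℤ) * (ℤ/2ℤ)`, where
the three free factors are generated by the images of `(1234)`, `(1324)` and `(1243)`
respectively. -/
theorem KMGamma_four (hn : 4 ≤ 4) :
    ∃ e : KMGamma 4 ≃* Monoid.CoprodI (fun _ : Fin 3 => Multiplicative (ZMod 2)),
      e (kmg 0 1 2 3 (by decide)) =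
        Monoid.CoprodI.of (M := fun _ : Fin 3 => Multiplicative (ZMod 2)) (i := 0)
          (Multiplicative.ofAdd (1 : ZMod 2)) ∧
      e (kmg 0 2 1 3 (by decide)) =
        Monoid.CoprodI.of (M := fun _ : Fin 3 => Multiplicative (ZMod 2)) (i := 1)
          (Multiplicative.ofAdd (1 : ZMod 2)) ∧
      e (kmg 0 1 3 2 (by decide)) =
        Monoid.CoprodI.of (M := fun _ : Fin 3 => Multiplicative (ZMod 2)) (i := 2)
          (Multiplicative.ofAdd (1 : ZMod 2)) := by
    refine ⟨KMFour.equiv, ?_, ?_, ?_⟩ <;> exact PresentedGroup.toGroup.of KMFour.hF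
end

section
/- Let n ≥ 6 and let j,k,l be elements of {1,...,n} with 3 ≤ j < k < l ≤ n. Then in Γ_n^4 the equality (2jkl) = (1j2k)(12lk)(1j2l)(1jlk) holds. -/
section KMAux

variable {n : ℕ}

lemma km_rel_one {r : FreeGroup (KMQuad n)} (h : r ∈ kmRels n) :
    PresentedGroup.mk (kmRels n) r = 1 := by
  have : r ∈ Subgroup.normalClosure (kmRels n) := Subgroup.subset_normalClosure h
  exact (QuotientGroup.eq_one_iff r).2 this

lemma kmg_sq (i j k l : Fin n) (h : ([i, j, k, l] : List (Fin n)).Nodup) :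
    kmg i j k l h * kmg i j k l h = 1 := by
  have hmem : (kmFree i j k l h * kmFree i j k l h) ∈ kmRels n :=
    Or.inl (Or.inl (Or.inl (Or.inl ⟨⟨i, j, k, l, h⟩, rfl⟩)))
  have := km_rel_one hmem
  rw [map_mul] at this
  exact this

lemma kmg_rot (i j k l : Fin n) (h : ([i, j, k, l] : List (Fin n)).Nodup)
    (h' : ([j, k, l, i] : List (Fin n)).Nodup) :
    kmg i j k l h = kmg j k l i h' := by
  have hmem : (kmFree i j k l h * (kmFree j k l i h')⁻¹) ∈ kmRels n :=
    Or.inl (Or.inr ⟨⟨i, j, k, l, h⟩, h', rfl⟩)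
  have := km_rel_one hmem
  rw [map_mul, map_inv, mul_inv_eq_one] at this
  exact this

lemma kmg_rev (i j k l : Fin n) (h : ([i, j, k, l] : List (Fin n)).Nodup)
    (h' : ([l, k, j, i] : List (Fin n)).Nodup) :
    kmg i j k l h = kmg l k j i h' := by
  have hmem : (kmFree i j k l h * (kmFree l k j i h')⁻¹) ∈ kmRels n :=
    Or.inr ⟨⟨i, j, k, l, h⟩, h', rfl⟩
  have := km_rel_one hmem
  rw [map_mul, map_inv, mul_inv_eq_one] at this
  exact this

lemma kmg_pent (i j k l m : Fin n) (h : ([i, j, k, l, m] : List (Fin n)).Nodup)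
    (h₁ : ([i, j, k, l] : List (Fin n)).Nodup)
    (h₂ : ([i, j, l, m] : List (Fin n)).Nodup)
    (h₃ : ([j, k, l, m] : List (Fin n)).Nodup)
    (h₄ : ([i, j, k, m] : List (Fin n)).Nodup)
    (h₅ : ([i, k, l, m] : List (Fin n)).Nodup) :
    kmg i j k l h₁ * kmg i j l m h₂ * kmg j k l m h₃ * kmg i j k m h₄ *
      kmg i k l m h₅ = 1 := by
  have hmem : (kmFree i j k l h₁ * kmFree i j l m h₂ * kmFree j k l m h₃ *
      kmFree i j k m h₄ * kmFree i k l m h₅) ∈ kmRels n :=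
    Or.inl (Or.inl (Or.inr ⟨i, j, k, l, m, h, h₁, h₂, h₃, h₄, h₅, rfl⟩))
  have := km_rel_one hmem
  simp only [map_mul] at this
  exact this

end KMAux

/-- For `n ≥ 6` and `3 ≤ j < k < l ≤ n`, the equality
`(2jkl) = (1j2k)(12lk)(1j2l)(1jlk)` holds in `Γₙ⁴`.  (Here `{1,…,n}` is encoded as
`Fin n`, the element `a` corresponding to `⟨a-1, _⟩`; thus `3 ≤ j` reads `2 ≤ j.val`.) -/
theorem KMGamma_A3_normal_form (n : ℕ) (hn : 6 ≤ n) (j k l : Fin n)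
    (hj : 2 ≤ j.val) (hjk : j < k) (hkl : k < l)
    (h₀ : ([⟨1, by omega⟩, j, k, l] : List (Fin n)).Nodup)
    (h₁ : ([⟨0, by omega⟩, j, ⟨1, by omega⟩, k] : List (Fin n)).Nodup)
    (h₂ : ([⟨0, by omega⟩, ⟨1, by omega⟩, l, k] : List (Fin n)).Nodup)
    (h₃ : ([⟨0, by omega⟩, j, ⟨1, by omega⟩, l] : List (Fin n)).Nodup)
    (h₄ : ([⟨0, by omega⟩, j, l, k] : List (Fin n)).Nodup) :
    (kmg ⟨1, by omega⟩ j k l h₀ : KMGamma n) =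
      kmg ⟨0, by omega⟩ j ⟨1, by omega⟩ k h₁ *
      kmg ⟨0, by omega⟩ ⟨1, by omega⟩ l k h₂ *
      kmg ⟨0, by omega⟩ j ⟨1, by omega⟩ l h₃ *
      kmg ⟨0, by omega⟩ j l k h₄ := by

  have hjv : 2 ≤ j.val := hj
  have hkv : j.val < k.val := hjk
  have hlv : k.val < l.val := hkl
  set a : Fin n := ⟨0, by omega⟩ with ha
  set b : Fin n := ⟨1, by omega⟩ with hb
  have h5 : ([a, j, b, l, k] : List (Fin n)).Nodup := by
    simp [Fin.ext_iff, ha, hb]; omega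
  have hYn : ([j, b, l, k] : List (Fin n)).Nodup := by
    simp [Fin.ext_iff, ha, hb]; omega
  have hR1 : ([l, k, j, b] : List (Fin n)).Nodup := by
    simp [Fin.ext_iff, ha, hb]; omega
  have hR2 : ([k, j, b, l] : List (Fin n)).Nodup := by
    simp [Fin.ext_iff, ha, hb]; omega
  set X1 := kmg a j b k h₁ with hX1
  set X2 := kmg a b l k h₂ with hX2
  set X3 := kmg a j b l h₃ with hX3
  set X4 := kmg a j l k h₄ with hX4
  set Y := kmg j b l k hYn with hYdef
  have pent : X3 * X4 * Y * X1 * X2 = 1 := kmg_pent a j b l k h5 h₃ h₄ hYn h₁ h₂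
  have s1 : X1 * X1 = 1 := kmg_sq _ _ _ _ _
  have s2 : X2 * X2 = 1 := kmg_sq _ _ _ _ _
  have s3 : X3 * X3 = 1 := kmg_sq _ _ _ _ _
  have s4 : X4 * X4 = 1 := kmg_sq _ _ _ _ _
  have sY : Y * Y = 1 := kmg_sq _ _ _ _ _
  have c2 : ∀ z : KMGamma n, X2 * (X2 * z) = z := fun z => by
    rw [← mul_assoc, s2, one_mul]
  have c3 : ∀ z : KMGamma n, X3 * (X3 * z) = z := fun z => by
    rw [← mul_assoc, s3, one_mul]
  have c4 : ∀ z : KMGamma n, X4 * (X4 * z) = z := fun z => by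
    rw [← mul_assoc, s4, one_mul]
  have key : Y = X4 * (X3 * (X3 * X4 * Y * X1 * X2) * X2) * X1 := by
    simp only [mul_assoc]
    rw [c2, s1, mul_one, c3, c4]
  have e1 : Y = X4 * X3 * X2 * X1 := by
    rw [key, pent, mul_one]
    group
  have lhsY : kmg b j k l h₀ = Y := by
    rw [kmg_rev b j k l h₀ hR1, kmg_rot l k j b hR1 hR2, kmg_rot k j b l hR2 hYn]
  have iY : Y⁻¹ = Y := inv_eq_of_mul_eq_one_right sY
  have i1 : X1⁻¹ = X1 := inv_eq_of_mul_eq_one_right s1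
  have i2 : X2⁻¹ = X2 := inv_eq_of_mul_eq_one_right s2
  have i3 : X3⁻¹ = X3 := inv_eq_of_mul_eq_one_right s3
  have i4 : X4⁻¹ = X4 := inv_eq_of_mul_eq_one_right s4
  calc kmg b j k l h₀ = Y := lhsY
    _ = Y⁻¹ := iY.symm
    _ = (X4 * X3 * X2 * X1)⁻¹ := by rw [e1]
    _ = X1⁻¹ * X2⁻¹ * X3⁻¹ * X4⁻¹ := by group
    _ = X1 * X2 * X3 * X4 := by rw [i1, i2, i3, i4]
end
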